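/- Consider a feedforward ReLU network with weight matrices W^{(l)} and no biases, and the Stopping decomposition with decomposed pre-activations z^{(l,±)}. For a backward path P = (P_l, ..., P_0) from neuron i in layer l to the input layer, let |w|(P) be the product of absolute weights along P, let sgn(P) be + if the number of negative weights along P is even and - otherwise, and let G(P) = ∏_{t=1}^{l-1} 1[z^{(t)}_{P_t} > 0] be the gate factor. Then z^{(l,+)}_i = Σ_{P: P_l = i} G(P)·|w|(P)·x^{sgn(P)}_{P_0} and z^{(l,-)}_i = Σ_{P: P_l = i} G(P)·|w|(P)·x^{-sgn(P)}_{P_0}, where x^+ and x^- denote positive and negative parts of the corresponding input coordinate. In particular, z^{(l,+)}_i - z^{(l,-)}_i = Σ_P G(P)·w(P)·x_{P_0} with w(P) the signed weight product. -/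

import Mathlib

open Finset

noncomputable section

/-- Positive part of a real number. -/
def pPart (u : ℝ) : ℝ := max u 0

/-- Negative part of a real number. -/
def nPart (u : ℝ) : ℝ := max (-u) 0

/-- Activations of a feedforward ReLU network without biases. -/
def nbAct (n : ℕ → ℕ) (W : ∀ l, Fin (n (l + 1)) → Fin (n l) → ℝ)
    (x : Fin (n 0) → ℝ) : ∀ l, Fin (n l) → ℝ
  | 0 => x
  | (l + 1) => fun i => max (∑ j, W l i j * nbAct n W x l j) 0

/-- Pre-activations of the bias-free ReLU network (input at layer 0). -/
def nbPre (n : ℕ → ℕ) (W : ∀ l, Fin (n (l + 1)) → Fin (n l) → ℝ)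
    (x : Fin (n 0) → ℝ) : ∀ l, Fin (n l) → ℝ
  | 0 => x
  | (l + 1) => fun i => ∑ j, W l i j * nbAct n W x l j

/-- Stopping-decomposition activation pairs of the bias-free network. -/
def nbStop (n : ℕ → ℕ) (W : ∀ l, Fin (n (l + 1)) → Fin (n l) → ℝ)
    (x : Fin (n 0) → ℝ) : ∀ l, Fin (n l) → ℝ × ℝ
  | 0 => fun k => (pPart (x k), nPart (x k))
  | (l + 1) => fun i =>
      let zp := ∑ j, (pPart (W l i j) * (nbStop n W x l j).1 +
        nPart (W l i j) * (nbStop n W x l j).2)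
      let zm := ∑ j, (pPart (W l i j) * (nbStop n W x l j).2 +
        nPart (W l i j) * (nbStop n W x l j).1)
      (if 0 < zp - zm then zp else 0, if 0 < zp - zm then zm else 0)

/-- Decomposed pre-activation `z^{(l+1,+)}` of the bias-free Stopping decomposition. -/
def nbZp (n : ℕ → ℕ) (W : ∀ l, Fin (n (l + 1)) → Fin (n l) → ℝ)
    (x : Fin (n 0) → ℝ) (l : ℕ) (i : Fin (n (l + 1))) : ℝ :=
  ∑ j, (pPart (W l i j) * (nbStop n W x l j).1 + nPart (W l i j) * (nbStop n W x l j).2)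

/-- Decomposed pre-activation `z^{(l+1,−)}` of the bias-free Stopping decomposition. -/
def nbZm (n : ℕ → ℕ) (W : ∀ l, Fin (n (l + 1)) → Fin (n l) → ℝ)
    (x : Fin (n 0) → ℝ) (l : ℕ) (i : Fin (n (l + 1))) : ℝ :=
  ∑ j, (pPart (W l i j) * (nbStop n W x l j).2 + nPart (W l i j) * (nbStop n W x l j).1)

/-! The sum `z⁺ + z⁻` obeys the gated linear recursion `s_i = ∑_j |W_ij| g_j s_j` with
input `|x|`, and the difference `z⁺ - z⁻` is the ReLU pre-activation, which obeys
`z_i = ∑_j W_ij g_j z_j` with input `x` (`g_j ∈ {0, 1}` the ReLU gate). Unrolling such a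
recursion writes it as a sum over backward paths of gate × edge-weight product × input.
On each path `w = (-1)^N |w|`, `N` the number of negative edges, so
`|w| x^{(-1)^N} = (|w| |x| + w x) / 2` and `|w| x^{-(-1)^N} = (|w| |x| - w x) / 2`: the parity
formulas are half the sum plus or minus half the difference of the two expansions. -/

abbrev NeuronPath (n : ℕ → ℕ) (k : ℕ) : Type := (t : Fin (k + 1)) → Fin (n t)

namespace NeuronPath

variable {n : ℕ → ℕ} {k : ℕ}

def gate (g : ∀ k, Fin (n k) → ℝ) (P : NeuronPath n k) : ℝ :=
  ∏ t : Fin (k + 1), if 0 < t.val ∧ t.val < k then g t (P t) else 1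

def weight (c : ∀ k, Fin (n (k + 1)) → Fin (n k) → ℝ) (P : NeuronPath n k) : ℝ :=
  ∏ t : Fin k, c t (P t.succ) (P t.castSucc)

def snoc (Q : NeuronPath n k) (i : Fin (n (k + 1))) : NeuronPath n (k + 1) :=
  Fin.snoc (α := fun t : Fin (k + 2) => Fin (n t)) Q i

@[simp] lemma snoc_castSucc (Q : NeuronPath n k) (i : Fin (n (k + 1))) (t : Fin (k + 1)) :
    Q.snoc i t.castSucc = Q t :=
  Fin.snoc_castSucc (α := fun t : Fin (k + 2) => Fin (n t)) ..

@[simp] lemma snoc_last (Q : NeuronPath n k) (i : Fin (n (k + 1))) :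
    Q.snoc i (Fin.last (k + 1)) = i :=
  Fin.snoc_last (α := fun t : Fin (k + 2) => Fin (n t)) ..

@[simp] lemma snoc_zero (Q : NeuronPath n k) (i : Fin (n (k + 1))) : Q.snoc i 0 = Q 0 :=
  Q.snoc_castSucc i 0

lemma sum_ite_last_eq_sum_snoc (i : Fin (n (k + 1))) (f : NeuronPath n (k + 1) → ℝ) :
    ∑ P : NeuronPath n (k + 1), (if P (Fin.last (k + 1)) = i then f P else 0) =
      ∑ Q : NeuronPath n k, f (Q.snoc i) := by
  rw [← (Fin.snocEquiv fun t : Fin (k + 2) => Fin (n t)).sum_comp, Fintype.sum_prod_type,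
    sum_comm]
  simp only [Fin.snocEquiv_apply, Fin.snoc_last, sum_ite_eq', mem_univ, if_true]
  rfl

lemma gate_snoc (g : ∀ k, Fin (n k) → ℝ) (Q : NeuronPath n k) (i : Fin (n (k + 1))) :
    gate g (Q.snoc i) = gate g Q * if 0 < k then g k (Q (Fin.last k)) else 1 := by
  simp only [gate, Fin.prod_univ_castSucc, Fin.val_castSucc, Fin.val_last, snoc_castSucc,
    lt_irrefl, and_false, if_false, mul_one, Fin.is_lt, and_true]

lemma weight_snoc (c : ∀ k, Fin (n (k + 1)) → Fin (n k) → ℝ) (Q : NeuronPath n k)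
    (i : Fin (n (k + 1))) : weight c (Q.snoc i) = weight c Q * c k i (Q (Fin.last k)) := by
  rw [weight, Fin.prod_univ_castSucc, weight]
  simp only [Fin.succ_castSucc, snoc_castSucc, Fin.val_castSucc, Fin.succ_last, snoc_last,
    Fin.val_last]

lemma sum_ite_zero_eq (i : Fin (n 0)) (f : Fin (n 0) → ℝ) :
    ∑ P : NeuronPath n 0, (if P 0 = i then f (P 0) else 0) = f i :=
  (Fintype.sum_equiv (Equiv.piUnique fun t : Fin 1 => Fin (n t)) _
    (fun j => if j = i then f j else 0) fun _ => rfl).trans (Fintype.sum_ite_eq' i f)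

theorem eq_sum_gate_mul_weight (H : ∀ k, Fin (n k) → ℝ)
    (c : ∀ k, Fin (n (k + 1)) → Fin (n k) → ℝ) (g : ∀ k, Fin (n k) → ℝ)
    (hH : ∀ k i, H (k + 1) i = ∑ j, c k i j * (if 0 < k then g k j else 1) * H k j) (k : ℕ)
    (i : Fin (n k)) :
    H k i = ∑ P : NeuronPath n k,
      if P (Fin.last k) = i then gate g P * weight c P * H 0 (P 0) else 0 := by
  induction k with
  | zero => simp [sum_ite_zero_eq, gate, weight]
  | succ k ih =>
    simp only [hH, ih, sum_ite_last_eq_sum_snoc, gate_snoc, weight_snoc, snoc_zero, mul_sum]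
    rw [sum_comm]
    refine sum_congr rfl fun Q _ => ?_
    simp only [mul_ite, mul_zero, sum_ite_eq, mem_univ, if_true]
    split_ifs <;> ring

end NeuronPath

lemma pPart_sub_nPart (u : ℝ) : pPart u - nPart u = u := posPart_sub_negPart u

lemma pPart_add_nPart (u : ℝ) : pPart u + nPart u = |u| := posPart_add_negPart u

lemma pPart_eq_half (u : ℝ) : pPart u = (|u| + u) / 2 := by
  linarith [pPart_sub_nPart u, pPart_add_nPart u]

lemma nPart_eq_half (u : ℝ) : nPart u = (|u| - u) / 2 := by
  linarith [pPart_sub_nPart u, pPart_add_nPart u]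

lemma prod_eq_neg_one_pow_mul_prod_abs {ι : Type*} [Fintype ι] (f : ι → ℝ) :
    ∏ t, f t = (-1) ^ #{t | f t < 0} * ∏ t, |f t| := by
  calc ∏ t, f t = ∏ t, (if f t < 0 then -1 else 1) * |f t| := by
        refine prod_congr rfl fun t _ => ?_
        split_ifs with h
        · rw [abs_of_neg h, neg_one_mul, neg_neg]
        · rw [abs_of_nonneg (not_lt.1 h), one_mul]
    _ = (-1) ^ #{t | f t < 0} * ∏ t, |f t| := by
        rw [prod_mul_distrib, prod_ite, prod_const, prod_const_one, mul_one]

lemma prod_abs_mul_parity_pPart {ι : Type*} [Fintype ι] (f : ι → ℝ) (u : ℝ) :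
    (∏ t, |f t|) * (if #{t | f t < 0} % 2 = 0 then pPart u else nPart u) =
      ((∏ t, |f t|) * |u| + (∏ t, f t) * u) / 2 := by
  rw [prod_eq_neg_one_pow_mul_prod_abs f, pPart_eq_half, nPart_eq_half]
  split_ifs with h
  · rw [Even.neg_one_pow (Nat.even_iff.2 h)]; ring
  · rw [Odd.neg_one_pow (Nat.odd_iff.2 (by omega))]; ring

lemma prod_abs_mul_parity_nPart {ι : Type*} [Fintype ι] (f : ι → ℝ) (u : ℝ) :
    (∏ t, |f t|) * (if #{t | f t < 0} % 2 = 0 then nPart u else pPart u) =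
      ((∏ t, |f t|) * |u| - (∏ t, f t) * u) / 2 := by
  rw [prod_eq_neg_one_pow_mul_prod_abs f, pPart_eq_half, nPart_eq_half]
  split_ifs with h
  · rw [Even.neg_one_pow (Nat.even_iff.2 h)]; ring
  · rw [Odd.neg_one_pow (Nat.odd_iff.2 (by omega))]; ring

section Network

variable (n : ℕ → ℕ) (W : ∀ l, Fin (n (l + 1)) → Fin (n l) → ℝ) (x : Fin (n 0) → ℝ)

def nbGate (k : ℕ) (j : Fin (n k)) : ℝ := if 0 < nbPre n W x k j then 1 else 0

def nbZSum : ∀ k, Fin (n k) → ℝ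
  | 0 => fun j => |x j|
  | k + 1 => fun i => nbZp n W x k i + nbZm n W x k i

variable {n W x}

lemma nbAct_eq_gate_mul_nbPre (k : ℕ) (j : Fin (n k)) :
    nbAct n W x k j = (if 0 < k then nbGate n W x k j else 1) * nbPre n W x k j := by
  cases k with
  | zero => simp [nbAct, nbPre]
  | succ k =>
    simp only [nbGate, Nat.succ_pos, if_true]
    show max (nbPre n W x (k + 1) j) 0 = _
    split_ifs with h
    · rw [max_eq_left h.le, one_mul]
    · rw [max_eq_right (not_lt.1 h), zero_mul]

lemma nbPre_eq_sum_paths (k : ℕ) (i : Fin (n k)) :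
    nbPre n W x k i = ∑ P : NeuronPath n k,
      if P (Fin.last k) = i then
        NeuronPath.gate (nbGate n W x) P * NeuronPath.weight W P * x (P 0) else 0 :=
  NeuronPath.eq_sum_gate_mul_weight _ W _ (fun k i => sum_congr rfl fun j _ => by
    rw [nbAct_eq_gate_mul_nbPre, mul_assoc]) k i

lemma nbZp_sub_nbZm_eq_sum (l : ℕ) (i : Fin (n (l + 1))) :
    nbZp n W x l i - nbZm n W x l i =
      ∑ j, W l i j * ((nbStop n W x l j).1 - (nbStop n W x l j).2) := by
  rw [nbZp, nbZm, ← sum_sub_distrib]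
  refine sum_congr rfl fun j _ => ?_
  linear_combination ((nbStop n W x l j).1 - (nbStop n W x l j).2) * pPart_sub_nPart (W l i j)

lemma nbStop_fst_sub_snd (l : ℕ) (j : Fin (n l)) :
    (nbStop n W x l j).1 - (nbStop n W x l j).2 = nbAct n W x l j := by
  induction l with
  | zero => exact pPart_sub_nPart (x j)
  | succ l ih =>
    have hz : nbZp n W x l j - nbZm n W x l j = nbPre n W x (l + 1) j := by
      simp only [nbZp_sub_nbZm_eq_sum, ih]; rfl
    show (if 0 < nbZp n W x l j - nbZm n W x l j then nbZp n W x l j else 0) -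
        (if 0 < nbZp n W x l j - nbZm n W x l j then nbZm n W x l j else 0) =
        max (nbPre n W x (l + 1) j) 0
    rw [hz]
    split_ifs with h
    · rw [← hz, max_eq_left (hz ▸ h.le)]
    · rw [max_eq_right (not_lt.1 h), sub_zero]

lemma nbZp_sub_nbZm (l : ℕ) (i : Fin (n (l + 1))) :
    nbZp n W x l i - nbZm n W x l i = nbPre n W x (l + 1) i := by
  simp only [nbZp_sub_nbZm_eq_sum, nbStop_fst_sub_snd]; rfl

lemma nbStop_succ (l : ℕ) (i : Fin (n (l + 1))) :
    nbStop n W x (l + 1) i =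
      (nbGate n W x (l + 1) i * nbZp n W x l i, nbGate n W x (l + 1) i * nbZm n W x l i) := by
  show (if 0 < nbZp n W x l i - nbZm n W x l i then nbZp n W x l i else 0,
    if 0 < nbZp n W x l i - nbZm n W x l i then nbZm n W x l i else 0) = _
  rw [nbGate, nbZp_sub_nbZm]
  split_ifs <;> simp

lemma nbStop_fst_add_snd (k : ℕ) (j : Fin (n k)) :
    (nbStop n W x k j).1 + (nbStop n W x k j).2 =
      (if 0 < k then nbGate n W x k j else 1) * nbZSum n W x k j := by
  cases k with
  | zero => rw [if_neg (lt_irrefl 0), one_mul]; exact pPart_add_nPart (x j)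
  | succ k => simp only [nbStop_succ, Nat.succ_pos, if_true, nbZSum]; ring

lemma nbZSum_eq_sum_paths (k : ℕ) (i : Fin (n k)) :
    nbZSum n W x k i = ∑ P : NeuronPath n k,
      if P (Fin.last k) = i then
        NeuronPath.gate (nbGate n W x) P * NeuronPath.weight (fun l i j => |W l i j|) P *
          |x (P 0)| else 0 := by
  refine NeuronPath.eq_sum_gate_mul_weight _ _ _ (fun k i => ?_) k i
  show nbZp n W x k i + nbZm n W x k i = _
  rw [nbZp, nbZm, ← sum_add_distrib]
  refine sum_congr rfl fun j _ => ?_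
  rw [mul_assoc, ← nbStop_fst_add_snd, ← pPart_add_nPart]
  ring

end Network

/-- Parity-path representation of the Stopping decomposition (bias-free network).
A backward path from neuron `i` at layer `l+1` to the input layer is
`P : (t : Fin (l+2)) → Fin (n t)` with `P (last) = i`; along it we take the product of
absolute weights, the gate factor over intermediate layers `1,…,l`, and the input part
`x⁺` or `x⁻` selected by the parity of the number of negative weights traversed. -/
theorem parity_path_decomposition (n : ℕ → ℕ)
    (W : ∀ l, Fin (n (l + 1)) → Fin (n l) → ℝ)
    (x : Fin (n 0) → ℝ) (l : ℕ) (i : Fin (n (l + 1))) :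
    let edge : ((t : Fin (l + 2)) → Fin (n t.val)) → Fin (l + 1) → ℝ := fun P t =>
      W t.val (P t.succ) (P t.castSucc)
    let absw : ((t : Fin (l + 2)) → Fin (n t.val)) → ℝ := fun P => ∏ t, |edge P t|
    let sgnw : ((t : Fin (l + 2)) → Fin (n t.val)) → ℝ := fun P => ∏ t, edge P t
    let evenSgn : ((t : Fin (l + 2)) → Fin (n t.val)) → Prop := fun P =>
      (Finset.univ.filter fun t => edge P t < 0).card % 2 = 0
    let gate : ((t : Fin (l + 2)) → Fin (n t.val)) → ℝ := fun P =>
      ∏ t : Fin (l + 2),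
        if 0 < t.val ∧ t.val < l + 1 then
          (if 0 < nbPre n W x t.val (P t) then (1 : ℝ) else 0)
        else 1
    (nbZp n W x l i =
      ∑ P : (t : Fin (l + 2)) → Fin (n t.val),
        (if P (Fin.last (l + 1)) = i then
          gate P * absw P *
            (if evenSgn P then pPart (x (P ⟨0, by omega⟩)) else nPart (x (P ⟨0, by omega⟩)))
        else 0)) ∧
    (nbZm n W x l i =
      ∑ P : (t : Fin (l + 2)) → Fin (n t.val),
        (if P (Fin.last (l + 1)) = i then
          gate P * absw P *
            (if evenSgn P then nPart (x (P ⟨0, by omega⟩)) else pPart (x (P ⟨0, by omega⟩)))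
        else 0)) ∧
    (nbZp n W x l i - nbZm n W x l i =
      ∑ P : (t : Fin (l + 2)) → Fin (n t.val),
        (if P (Fin.last (l + 1)) = i then gate P * sgnw P * x (P ⟨0, by omega⟩) else 0)) := by
  intro edge absw sgnw evenSgn gate
  have hsum : nbZp n W x l i + nbZm n W x l i = ∑ P : (t : Fin (l + 2)) → Fin (n t.val),
      (if P (Fin.last (l + 1)) = i then gate P * absw P * |x (P ⟨0, by omega⟩)| else 0) :=
    nbZSum_eq_sum_paths (l + 1) i
  have hdiff : nbZp n W x l i - nbZm n W x l i = ∑ P : (t : Fin (l + 2)) → Fin (n t.val),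
      (if P (Fin.last (l + 1)) = i then gate P * sgnw P * x (P ⟨0, by omega⟩) else 0) :=
    (nbZp_sub_nbZm l i).trans (nbPre_eq_sum_paths (l + 1) i)
  have hplus : ∀ P u, absw P * (if evenSgn P then pPart u else nPart u) =
      (absw P * |u| + sgnw P * u) / 2 := fun P => prod_abs_mul_parity_pPart (edge P)
  have hminus : ∀ P u, absw P * (if evenSgn P then nPart u else pPart u) =
      (absw P * |u| - sgnw P * u) / 2 := fun P => prod_abs_mul_parity_nPart (edge P)
  refine ⟨?_, ?_, hdiff⟩
  · rw [show nbZp n W x l i = ((nbZp n W x l i + nbZm n W x l i) +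
        (nbZp n W x l i - nbZm n W x l i)) / 2 by ring, hsum, hdiff, ← sum_add_distrib, sum_div]
    refine sum_congr rfl fun P _ => ?_
    simp only [mul_assoc, hplus]
    split_ifs <;> ring
  · rw [show nbZm n W x l i = ((nbZp n W x l i + nbZm n W x l i) -
        (nbZp n W x l i - nbZm n W x l i)) / 2 by ring, hsum, hdiff, ← sum_sub_distrib, sum_div]
    refine sum_congr rfl fun P _ => ?_
    simp only [mul_assoc, hminus]
    split_ifs <;> ring

end
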